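/- arXiv:1611.03975 — 2 statements merged into one kernel-verified Lean document; each statement's English description precedes it below -/
import Mathlib

section
/- Let A be a finite abelian p-group equipped with a perfect, alternating, bilinear pairing A × A → ℚ/ℤ. Then A is isomorphic to B × B for some finite abelian p-group B; in particular, every invariant of A occurs with even multiplicity and the order of A is a square. -/
lemma addcircle_torsion (n : ℕ) (hn : n ≠ 0) (u : AddCircle (1:ℚ)) (h : n • u = 0) :
    ∃ k : ℤ, u = k • (((n:ℚ)⁻¹ : ℚ) : AddCircle (1:ℚ)) := by
  induction u using QuotientAddGroup.induction_on with
  | H q =>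
    rw [← QuotientAddGroup.mk_nsmul, QuotientAddGroup.eq_zero_iff,
      AddSubgroup.mem_zmultiples_iff] at h
    obtain ⟨m, hm⟩ := h
    refine ⟨m, ?_⟩
    rw [← QuotientAddGroup.mk_zsmul]
    congr 1
    have hn' : (n:ℚ) ≠ 0 := Nat.cast_ne_zero.mpr hn
    rw [zsmul_eq_mul, mul_one, nsmul_eq_mul] at hm
    rw [zsmul_eq_mul]
    field_simp
    linarith [hm]

lemma zsmul_tau_eq_zero_iff (n : ℕ) (hn : n ≠ 0) (m : ℤ) :
    m • (((n:ℚ)⁻¹:ℚ) : AddCircle (1:ℚ)) = 0 ↔ (n:ℤ) ∣ m := by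
  have hn' : (n:ℚ) ≠ 0 := Nat.cast_ne_zero.mpr hn
  rw [← QuotientAddGroup.mk_zsmul, QuotientAddGroup.eq_zero_iff,
    AddSubgroup.mem_zmultiples_iff]
  constructor
  · rintro ⟨j, hj⟩
    rw [zsmul_eq_mul, mul_one, zsmul_eq_mul] at hj
    refine ⟨j, ?_⟩
    have h2 : (m : ℚ) = (j : ℚ) * n := by field_simp at hj; linarith
    exact_mod_cast h2.trans (mul_comm (j:ℚ) n)
  · rintro ⟨j, rfl⟩
    refine ⟨j, ?_⟩
    rw [zsmul_eq_mul, mul_one, zsmul_eq_mul]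
    field_simp
    push_cast; ring

universe u

lemma main_induction (p : ℕ) (hp : p.Prime) :
    ∀ (N : ℕ) (A : Type u) [AddCommGroup A] [Fintype A],
      Nat.card A ≤ N → (∃ n : ℕ, Nat.card A = p ^ n) →
      ∀ (b : A →+ A →+ AddCircle (1:ℚ)), (∀ a, b a a = 0) →
      Function.Bijective (fun a : A => b a) →
      ∃ (B : Type) (_ : AddCommGroup B), Nonempty (A ≃+ B × B) := by
  intro N
  induction N with
  | zero =>
    intro A _ _ hcard _ _ _ _
    have := Nat.card_pos (α := A)
    omega
  | succ N ih =>
    intro A _ _ hcard hA b halt hperf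
    classical
    by_cases htriv : Nat.card A = 1
    · haveI : Subsingleton A := (Nat.card_eq_one_iff_unique.mp htriv).1
      haveI : Unique A := ⟨⟨0⟩, fun a => Subsingleton.elim a 0⟩
      have e : A ≃+ PUnit × PUnit :=
        { toFun := fun _ => 0
          invFun := fun _ => 0
          left_inv := fun a => Subsingleton.elim _ _
          right_inv := fun z => Subsingleton.elim _ _
          map_add' := fun _ _ => Subsingleton.elim _ _ }
      exact ⟨PUnit, inferInstance, ⟨e⟩⟩
    -- skew symmetry
    have hskew : ∀ y z : A, b y z = - b z y := by
      intro y z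
      have h0 := halt (y + z)
      simp only [map_add, AddMonoidHom.add_apply, halt, zero_add, add_zero] at h0
      exact eq_neg_of_add_eq_zero_right h0
    obtain ⟨NA, hNA⟩ := hA
    have hpN : ∀ y : A, p ^ NA • y = 0 := by
      intro y
      have h1 : Fintype.card A = p ^ NA := (Nat.card_eq_fintype_card (α := A)).symm.trans hNA
      rw [← h1]
      exact card_nsmul_eq_zero
    have hS : ∃ n : ℕ, ∀ y : A, p ^ n • y = 0 := ⟨NA, hpN⟩
    obtain ⟨n, hn, hmin'⟩ : ∃ n : ℕ, (∀ y : A, p ^ n • y = 0) ∧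
        ∀ m : ℕ, m < n → ¬ ∀ y : A, p ^ m • y = 0 :=
      ⟨Nat.find hS, Nat.find_spec hS, fun m hm => Nat.find_min hS hm⟩
    haveI : Nontrivial A := Finite.one_lt_card_iff_nontrivial.mp
      (by have := Nat.card_pos (α := A); omega)
    have hn1 : 1 ≤ n := by
      by_contra h
      obtain ⟨y, hy⟩ := exists_ne (0:A)
      apply hy
      have hn0 : n = 0 := by omega
      have := hn y
      rw [hn0, pow_zero, one_nsmul] at this
      exact this
    have hmin : ¬ ∀ y : A, p ^ (n-1) • y = 0 := hmin' (n-1) (by omega)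
    obtain ⟨M, hM⟩ : ∃ M : ℕ, M = p ^ n := ⟨_, rfl⟩
    have hnM : ∀ y : A, M • y = 0 := by intro y; rw [hM]; exact hn y
    have hM1 : 1 < M := hM ▸ Nat.one_lt_pow (by omega) hp.one_lt
    haveI : NeZero M := ⟨by omega⟩
    have hMne : M ≠ 0 := by omega
    obtain ⟨τ, hτ⟩ : ∃ τ : AddCircle (1:ℚ), τ = (((M:ℚ)⁻¹ : ℚ) : AddCircle (1:ℚ)) := ⟨_, rfl⟩
    have htau : ∀ m : ℤ, m • τ = 0 ↔ (M:ℤ) ∣ m := by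
      intro m; rw [hτ]; exact zsmul_tau_eq_zero_iff M hMne m
    have htau0 : τ ≠ 0 := by
      intro h
      have h1 : (M:ℤ) ∣ 1 := (htau 1).mp (by simpa using h)
      have h2 : (M:ℕ) ∣ 1 := by exact_mod_cast h1
      have := Nat.le_of_dvd one_pos h2
      omega
    -- existence of a pair pairing to τ exactly
    have hex : ∃ a x : A, p ^ (n-1) • (b a x) ≠ 0 := by
      by_contra hcon
      push_neg at hcon
      refine hmin (fun y => ?_)
      have hb0 : b (p ^ (n-1) • y) = 0 := by
        ext z
        rw [map_nsmul]
        simpa using hcon y z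
      exact hperf.injective (show b (p ^ (n-1) • y) = b 0 by rw [hb0, map_zero])
    obtain ⟨a, x, hbax⟩ : ∃ a x : A, b a x = τ := by
      obtain ⟨a, x1, hax1⟩ := hex
      have ht0 : M • (b a x1) = 0 := by
        rw [show M • (b a x1) = b a (M • x1) from (map_nsmul (b a) M x1).symm, hnM x1, map_zero]
      obtain ⟨k, hk0⟩ := addcircle_torsion M hMne _ ht0
      have hk : b a x1 = k • τ := by rw [hτ]; exact hk0
      have hpk : ¬ (p:ℤ) ∣ k := by
        rintro ⟨k', rfl⟩
        apply hax1
        rw [hk, ← natCast_zsmul, smul_smul, htau]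
        refine ⟨k', ?_⟩
        have hpow : ((p:ℤ))^(n-1+1) = ((p:ℤ))^n := by congr 1; omega
        rw [hM]
        push_cast
        rw [← hpow, pow_succ]
        ring
      have hcop : Nat.Coprime (k.natAbs) M := by
        rw [hM]
        apply Nat.Coprime.pow_right
        have hnd : ¬ p ∣ k.natAbs := by
          intro h
          exact hpk (Int.dvd_natAbs.mp (Int.natCast_dvd_natCast.mpr h))
        exact ((Nat.Prime.coprime_iff_not_dvd hp).mpr hnd).symm
      have hunit : IsUnit ((k : ZMod M)) := by
        rcases Int.natAbs_eq k with h | h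
        · rw [h, Int.cast_natCast]
          exact (ZMod.isUnit_iff_coprime _ _).mpr hcop
        · rw [h, Int.cast_neg, Int.cast_natCast]
          exact ((ZMod.isUnit_iff_coprime _ _).mpr hcop).neg
      refine ⟨a, ((((k : ZMod M))⁻¹).val : ℤ) • x1, ?_⟩
      set k' : ℤ := ((((k : ZMod M))⁻¹).val : ℤ) with hk'_def
      have hkk' : (M:ℤ) ∣ (k' * k - 1) := by
        have hz : ((k' * k - 1 : ℤ) : ZMod M) = 0 := by
          push_cast [hk'_def]
          rw [ZMod.natCast_val, ZMod.cast_id, ZMod.inv_mul_of_unit _ hunit]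
          ring
        exact (ZMod.intCast_zmod_eq_zero_iff_dvd _ M).mp hz
      rw [map_zsmul, hk, smul_smul]
      have h2 : (k' * k - 1) • τ = 0 := (htau _).mpr hkk'
      have h3 : (k' * k) • τ - τ = (k' * k - 1) • τ := by
        rw [sub_zsmul, one_zsmul]
        abel
      exact sub_eq_zero.mp (h3.trans h2)
    have hbxa : b x a = -τ := by rw [hskew x a, hbax]
    -- the submodules
    set H : Submodule ℤ A := Submodule.span ℤ ({a, x} : Set A) with hH_def
    set K : Submodule ℤ A :=
      LinearMap.ker ((b a).toIntLinearMap) ⊓ LinearMap.ker ((b x).toIntLinearMap) with hK_def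
    have hmemK : ∀ z : A, z ∈ K ↔ (b a z = 0 ∧ b x z = 0) := by
      intro z
      have h := Submodule.mem_inf (p := LinearMap.ker ((b a).toIntLinearMap))
        (q := LinearMap.ker ((b x).toIntLinearMap)) (x := z)
      rw [LinearMap.mem_ker, LinearMap.mem_ker] at h
      exact h
    have hMsmul : ∀ (j : ℤ) (y : A), (M:ℤ) ∣ j → j • y = 0 := by
      rintro j y ⟨j', rfl⟩
      rw [mul_smul, natCast_zsmul]
      rw [hnM (j' • y)]
    have hba_comb : ∀ (i j : ℤ), b a (i • a + j • x) = j • τ := by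
      intro i j
      rw [map_add, map_zsmul, map_zsmul, halt a, hbax, smul_zero, zero_add]
    have hbx_comb : ∀ (i j : ℤ), b x (i • a + j • x) = (-i) • τ := by
      intro i j
      rw [map_add, map_zsmul, map_zsmul, hbxa, halt x, smul_zero, add_zero,
        smul_neg, neg_smul]
    have hcomb_b : ∀ (i j : ℤ) (z : A), b (i • a + j • x) z = i • (b a z) + j • (b x z) := by
      intro i j z
      rw [map_add, map_zsmul, map_zsmul]
      rfl
    have hdisj : Disjoint H K := by
      rw [Submodule.disjoint_def]
      intro y hyH hyK
      obtain ⟨i, j, rfl⟩ := Submodule.mem_span_pair.mp hyH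
      obtain ⟨h1, h2⟩ := (hmemK _).mp hyK
      rw [hba_comb] at h1
      rw [hbx_comb] at h2
      have hj := (htau j).mp h1
      have hi : (M:ℤ) ∣ i := dvd_neg.mp ((htau (-i)).mp h2)
      rw [hMsmul i a hi, hMsmul j x hj, add_zero]
    have hcodisj : Codisjoint H K := by
      rw [codisjoint_iff, Submodule.eq_top_iff']
      intro y
      have h1 : M • (b a y) = 0 := by
        rw [show M • (b a y) = b a (M • y) from (map_nsmul (b a) M y).symm, hnM y, map_zero]
      have h2 : M • (b x y) = 0 := by
        rw [show M • (b x y) = b x (M • y) from (map_nsmul (b x) M y).symm, hnM y, map_zero]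
      obtain ⟨j, hj0⟩ := addcircle_torsion M hMne _ h1
      obtain ⟨i', hi0⟩ := addcircle_torsion M hMne _ h2
      have hj : b a y = j • τ := by rw [hτ]; exact hj0
      have hi' : b x y = i' • τ := by rw [hτ]; exact hi0
      refine Submodule.mem_sup.mpr ⟨(-i') • a + j • x,
        Submodule.mem_span_pair.mpr ⟨-i', j, rfl⟩,
        y - ((-i') • a + j • x), ?_, by abel⟩
      refine (hmemK _).mpr ⟨?_, ?_⟩
      · rw [map_sub, hba_comb, hj, sub_self]
      · rw [map_sub, hbx_comb, hi', neg_neg, sub_self]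
    have hcompl : IsCompl H K := ⟨hdisj, hcodisj⟩
    have hHKorth : ∀ h ∈ H, ∀ z ∈ K, b h z = 0 := by
      intro h hh z hz
      obtain ⟨i, j, rfl⟩ := Submodule.mem_span_pair.mp hh
      obtain ⟨h1, h2⟩ := (hmemK z).mp hz
      rw [hcomb_b, h1, h2, smul_zero, smul_zero, add_zero]
    have e0 : (H × K) ≃ₗ[ℤ] A := Submodule.prodEquivOfIsCompl H K hcompl
    -- H ≃ ZMod M × ZMod M
    have ha0 : (zmultiplesHom A) a ((M:ℕ) : ℤ) = 0 := by
      rw [zmultiplesHom_apply]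
      exact hMsmul _ a dvd_rfl
    have hx0 : (zmultiplesHom A) x ((M:ℕ) : ℤ) = 0 := by
      rw [zmultiplesHom_apply]
      exact hMsmul _ x dvd_rfl
    obtain ⟨g, hg⟩ : ∃ g : ZMod M × ZMod M →+ A,
        ∀ (i j : ℤ), g ((i : ZMod M), (j : ZMod M)) = i • a + j • x := by
      refine ⟨(ZMod.lift M ⟨(zmultiplesHom A) a, ha0⟩).coprod
        (ZMod.lift M ⟨(zmultiplesHom A) x, hx0⟩), ?_⟩
      intro i j
      rw [AddMonoidHom.coprod_apply]
      simp only [ZMod.lift_coe, zmultiplesHom_apply]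
    have hcast : ∀ u : ZMod M, (((u.val : ℤ)) : ZMod M) = u := by
      intro u
      push_cast
      rw [ZMod.natCast_val, ZMod.cast_id]
    have hgrep : ∀ u v : ZMod M, g (u, v) = (u.val : ℤ) • a + (v.val : ℤ) • x := by
      intro u v
      rw [← hg]
      rw [hcast u, hcast v]
    have hgrange : LinearMap.range (g.toIntLinearMap) = H := by
      apply le_antisymm
      · rintro y ⟨⟨u, v⟩, rfl⟩
        exact Submodule.mem_span_pair.mpr ⟨(u.val:ℤ), (v.val:ℤ), (hgrep u v).symm⟩
      · rw [hH_def, Submodule.span_le]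
        rintro y (rfl | rfl)
        · exact ⟨((1 : ZMod M), 0), by simpa using hg 1 0⟩
        · exact ⟨((0 : ZMod M), 1), by simpa using hg 0 1⟩
    have hginj : Function.Injective g := by
      rw [injective_iff_map_eq_zero]
      rintro ⟨u, v⟩ h0
      rw [hgrep] at h0
      have e1 : ((v.val:ℤ)) • τ = 0 := by rw [← hba_comb (u.val:ℤ) (v.val:ℤ), h0, map_zero]
      have e2 : (-(u.val:ℤ)) • τ = 0 := by rw [← hbx_comb (u.val:ℤ) (v.val:ℤ), h0, map_zero]
      have hv : (M:ℤ) ∣ (v.val:ℤ) := (htau _).mp e1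
      have hu : (M:ℤ) ∣ (u.val:ℤ) := dvd_neg.mp ((htau _).mp e2)
      have hv' : v.val = 0 :=
        Nat.eq_zero_of_dvd_of_lt (Int.natCast_dvd_natCast.mp hv) (ZMod.val_lt v)
      have hu' : u.val = 0 :=
        Nat.eq_zero_of_dvd_of_lt (Int.natCast_dvd_natCast.mp hu) (ZMod.val_lt u)
      have h1 : u = 0 := (ZMod.val_eq_zero u).mp hu'
      have h2 : v = 0 := (ZMod.val_eq_zero v).mp hv'
      simp [h1, h2, Prod.ext_iff]
    have eH : (ZMod M × ZMod M) ≃ₗ[ℤ] H :=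
      (LinearEquiv.ofInjective g.toIntLinearMap hginj).trans (LinearEquiv.ofEq _ _ hgrange)
    -- cardinalities
    have hcardA : Nat.card A = Nat.card H * Nat.card K := by
      rw [← Nat.card_congr e0.toEquiv, Nat.card_prod]
    have haH : a ∈ H := Submodule.subset_span (by simp)
    have ha0' : a ≠ 0 := by
      intro h
      apply htau0
      rw [← hbax, h, map_zero]
      rfl
    have hHnt : Nontrivial H := ⟨⟨⟨a, haH⟩, 0, by simpa [Subtype.ext_iff] using ha0'⟩⟩
    have hHcard : 1 < Nat.card H := Finite.one_lt_card_iff_nontrivial.mpr hHnt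
    have hKpos : 0 < Nat.card K := Nat.card_pos
    have hKlt : Nat.card K < Nat.card A := by nlinarith [hcardA]
    haveI : Fintype K := Fintype.ofFinite K
    have hKcard : ∃ m, Nat.card K = p ^ m := by
      have hdvd : Nat.card K ∣ Nat.card A := AddSubgroup.card_addSubgroup_dvd_card K.toAddSubgroup
      rw [hNA] at hdvd
      obtain ⟨m, _, hm⟩ := (Nat.dvd_prime_pow hp).mp hdvd
      exact ⟨m, hm⟩
    -- restricted pairing
    set sub : ↥K →+ A := (K.subtype).toAddMonoidHom with hsub
    set bK : ↥K →+ ↥K →+ AddCircle (1:ℚ) := ((b.comp sub).flip.comp sub).flip with hbK_def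
    have hbK : ∀ (z w : ↥K), bK z w = b ↑z ↑w := fun z w => rfl
    have haltK : ∀ z : ↥K, bK z z = 0 := fun z => halt _
    have hKinj : ∀ z : ↥K, bK z = 0 → z = 0 := by
      intro z hz
      have hz' : ∀ w : A, w ∈ K → b ↑z w = 0 := by
        intro w hw
        have := DFunLike.congr_fun hz (⟨w, hw⟩ : ↥K)
        simpa [hbK] using this
      have hball : b (↑z : A) = 0 := by
        ext y
        have hy : y ∈ H ⊔ K := by
          rw [codisjoint_iff.mp hcodisj]; exact Submodule.mem_top
        obtain ⟨h, hh, w, hw, rfl⟩ := Submodule.mem_sup.mp hy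
        rw [map_add]
        have hzh : b (↑z : A) h = 0 := by
          rw [hskew, hHKorth h hh ↑z z.2, neg_zero]
        rw [hzh, hz' w hw, add_zero, AddMonoidHom.zero_apply]
      have hz0 : (z : A) = 0 := hperf.injective (show b (↑z : A) = b 0 by rw [hball, map_zero])
      exact Subtype.ext hz0
    have hKsurj : ∀ φ : ↥K →+ AddCircle (1:ℚ), ∃ z : ↥K, bK z = φ := by
      intro φ
      obtain ⟨y, hy⟩ :=
        hperf.surjective (φ.comp (K.linearProjOfIsCompl H hcompl.symm).toAddMonoidHom)
      simp only at hy
      have hy' : y ∈ H ⊔ K := by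
        rw [codisjoint_iff.mp hcodisj]; exact Submodule.mem_top
      obtain ⟨h, hh, w, hw, hyw⟩ := Submodule.mem_sup.mp hy'
      refine ⟨⟨w, hw⟩, ?_⟩
      ext v
      rw [hbK]
      have hby : b y ↑v = φ v := by
        rw [hy]
        simp only [AddMonoidHom.coe_comp, Function.comp_apply, LinearMap.toAddMonoidHom_coe]
        congr 1
        exact Submodule.linearProjOfIsCompl_apply_left hcompl.symm v
      rw [← hyw, map_add, AddMonoidHom.add_apply, hHKorth h hh ↑v v.2, zero_add] at hby
      exact hby
    have hKperf : Function.Bijective (fun z : ↥K => bK z) := by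
      constructor
      · exact (injective_iff_map_eq_zero bK).mpr hKinj
      · exact fun φ => hKsurj φ
    -- recurse
    obtain ⟨C, instC, hC⟩ := ih ↥K (by omega) hKcard bK haltK hKperf
    letI := instC
    obtain ⟨eC⟩ := hC
    refine ⟨ZMod M × C, inferInstance, ⟨?_⟩⟩
    exact (e0.symm.toAddEquiv).trans
      ((AddEquiv.prodCongr (eH.symm.toAddEquiv) eC).trans
        (AddEquiv.prodProdProdComm (ZMod M) (ZMod M) C C))

/-- A finite abelian `p`-group carrying a perfect alternating bilinear pairing with
values in `ℚ/ℤ` is isomorphic to `B × B` for some finite abelian `p`-group `B`;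
in particular its order is a square. -/
theorem stmt3 (p : ℕ) (hp : p.Prime) (A : Type*) [AddCommGroup A] [Fintype A]
    (hA : ∃ n : ℕ, Nat.card A = p ^ n)
    (b : A →+ A →+ AddCircle (1 : ℚ))
    (halt : ∀ a : A, b a a = 0)
    (hperf : Function.Bijective fun a : A => b a) :
    ∃ (B : Type) (_ : AddCommGroup B) (_ : Fintype B),
      (∃ m : ℕ, Nat.card B = p ^ m) ∧ Nonempty (A ≃+ B × B) ∧
        IsSquare (Nat.card A) := by
  obtain ⟨B, instB, ⟨e⟩⟩ := main_induction p hp (Nat.card A) A le_rfl hA b halt hperf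
  letI := instB
  haveI : Finite B := by
    have hinj : Function.Injective (fun c : B => e.symm (c, 0)) := by
      intro c1 c2 h
      have := e.symm.injective h
      exact ((Prod.mk.injEq _ _ _ _).mp this).1
    exact Finite.of_injective _ hinj
  haveI : Fintype B := Fintype.ofFinite B
  have hcard : Nat.card A = Nat.card B * Nat.card B := by
    rw [Nat.card_congr e.toEquiv, Nat.card_prod]
  obtain ⟨nn, hnn⟩ := hA
  have hdvd : Nat.card B ∣ p ^ nn := ⟨Nat.card B, by rw [← hnn, hcard]⟩
  obtain ⟨m, _, hm⟩ := (Nat.dvd_prime_pow hp).mp hdvd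
  exact ⟨B, instB, inferInstance, ⟨m, hm⟩, ⟨e⟩, ⟨Nat.card B, hcard⟩⟩
end

section
/- Let p be a prime, M ≥ 1, and let A, B be abelian groups of exponent dividing p^M with a bilinear pairing ⟨·,·⟩ : A × B → ℤ/p^Mℤ that is perfect (induces isomorphisms A ≅ Hom(B, ℤ/p^Mℤ)). If a ∈ A and b ∈ B satisfy ord(a)·ord(b) > p^M and A, B are cyclic, then ⟨a, b⟩ ≠ 0. -/
/-- If `A`, `B` are cyclic of order `p^M` with a perfect bilinear pairing into
`ℤ/p^Mℤ`, and `a ∈ A`, `b ∈ B` satisfy `ord(a)·ord(b) > p^M`, then `⟨a,b⟩ ≠ 0`. -/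
theorem stmt12 (p : ℕ) (hp : p.Prime) (M : ℕ) (hM : 1 ≤ M)
    {A B : Type*} [AddCommGroup A] [AddCommGroup B]
    (hA : IsAddCyclic A) (hB : IsAddCyclic B)
    (hcardA : Nat.card A = p ^ M) (hcardB : Nat.card B = p ^ M)
    (pair : A →+ B →+ ZMod (p ^ M))
    (hperf : Function.Bijective fun a : A => pair a)
    (a : A) (b : B) (h : p ^ M < addOrderOf a * addOrderOf b) :
    pair a b ≠ 0 := by
  have hpM : 0 < p ^ M := Nat.pow_pos hp.pos
  have hfinB : Finite B := Nat.finite_of_card_ne_zero (by omega)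
  have hfinA : Finite A := Nat.finite_of_card_ne_zero (by omega)
  obtain ⟨g, hg⟩ := hB
  have hgord : addOrderOf g = p ^ M := by
    rw [addOrderOf_eq_card_of_forall_mem_zmultiples hg, hcardB]
  -- write b = m • g
  obtain ⟨m, hm⟩ := mem_multiples_iff_mem_zmultiples.2 (hg b)
  have hm' : m • g = b := hm
  set n := addOrderOf b with hn
  have hndvd : n ∣ p ^ M := hcardB ▸ addOrderOf_dvd_natCard b
  have hnpos : 0 < n := addOrderOf_pos b
  have hnle : n ≤ p ^ M := Nat.le_of_dvd hpM hndvd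
  set k := p ^ M / n with hkdef
  have hkn : k * n = p ^ M := Nat.div_mul_cancel hndvd
  have hkpos : 0 < k := Nat.div_pos hnle hnpos
  -- n = p^M / gcd(p^M, m)
  have hnm : n = p ^ M / Nat.gcd (p ^ M) m := by
    rw [hn, ← hm', (isOfFinAddOrder_of_finite g).addOrderOf_nsmul, hgord]
  have hgcddvd : Nat.gcd (p ^ M) m ∣ p ^ M := Nat.gcd_dvd_left _ _
  have hgk : Nat.gcd (p ^ M) m = k := by
    rw [hkdef, hnm, Nat.div_div_self hgcddvd (by omega)]
  have hkm : k ∣ m := hgk ▸ Nat.gcd_dvd_right _ _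
  obtain ⟨u, hu⟩ := hkm
  -- gcd(n, u) = 1
  have hgnu : Nat.gcd n u = 1 := by
    have h1 := Nat.gcd_mul_left k n u
    rw [hkn, ← hu, hgk] at h1
    have h2 : k * 1 = k * Nat.gcd n u := by rw [mul_one]; exact h1
    exact (Nat.eq_of_mul_eq_mul_left hkpos h2).symm
  -- n > 1
  have hage : addOrderOf a ≤ p ^ M := Nat.le_of_dvd hpM (hcardA ▸ addOrderOf_dvd_natCard a)
  have hn1 : 1 < n := by
    by_contra h1
    have hne : n = 1 := by omega
    rw [hne, mul_one] at h
    omega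
  -- p ∣ n
  have hpn : p ∣ n := by
    obtain ⟨i, hi, hni⟩ := (Nat.dvd_prime_pow hp).1 hndvd
    have hi1 : 1 ≤ i := by
      by_contra hi0
      have : i = 0 := by omega
      rw [this, pow_zero] at hni
      omega
    exact hni ▸ dvd_pow_self p (by omega)
  -- u coprime to p^M
  have hpu : ¬ p ∣ u := by
    intro hpu
    have hd : p ∣ Nat.gcd n u := Nat.dvd_gcd hpn hpu
    rw [hgnu] at hd
    have := Nat.le_of_dvd one_pos hd
    have := hp.two_le
    omega
  have hup : Nat.Coprime u (p ^ M) :=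
    Nat.Coprime.pow_right M (((Nat.Prime.coprime_iff_not_dvd hp).2 hpu).symm)
  obtain ⟨c, hc⟩ : ∃ c : B, c = u • g := ⟨_, rfl⟩
  have hbkc : b = k • c := by
    rw [hc, ← hm', hu, mul_smul]
  -- k < addOrderOf a
  have hka : k < addOrderOf a := by
    have h2 : k * n < addOrderOf a * n := by rw [hkn]; exact h
    exact Nat.lt_of_mul_lt_mul_right h2
  -- suppose pair a b = 0
  intro hzero
  have hpc : pair (k • a) c = 0 := by
    have h1 : pair (k • a) c = k • pair a c := by
      have h3 := map_nsmul (pair.flip c) k a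
      simp only [AddMonoidHom.flip_apply] at h3
      exact h3
    have h2 : pair a b = k • pair a c := by
      rw [hbkc, map_nsmul]
    rw [h1, ← h2, hzero]
  -- g ∈ multiples of c
  obtain ⟨u', -, huu'⟩ := Nat.exists_mul_mod_eq_one_of_coprime hup (by
    have := hp.two_le
    calc 1 < p := by omega
    _ ≤ p ^ M := Nat.le_self_pow (by omega) p)
  have hgc : u' • c = g := by
    rw [hc, ← mul_smul]
    calc (u' * u) • g = ((u' * u) % addOrderOf g) • g := (mod_addOrderOf_nsmul g _).symm
    _ = g := by rw [hgord, mul_comm u' u, huu', one_nsmul]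
  -- pair (k • a) = 0
  have hall : pair (k • a) = 0 := by
    ext x
    obtain ⟨s, hs⟩ := hg x
    have hs' : s • g = x := hs
    rw [AddMonoidHom.zero_apply, ← hs', ← hgc, map_zsmul, map_nsmul, hpc, smul_zero, smul_zero]
  have hka0 : k • a = 0 := by
    apply hperf.injective
    show pair (k • a) = pair 0
    rw [hall, map_zero]
  have hdvd : addOrderOf a ∣ k := addOrderOf_dvd_of_nsmul_eq_zero hka0
  exact absurd (Nat.le_of_dvd hkpos hdvd) (by omega)
end
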